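/- arXiv:0712.2940 — 3 statements merged into one kernel-verified Lean document; each statement's English description precedes it below -/
import Mathlib

section
/- A real-valued random variable W has the standard Gaussian distribution N(0,1) if, and only if, E[f'(W) − W f(W)] = 0 for every continuous and piecewise continuously differentiable function f : ℝ → ℝ verifying E|f'(Z)| < ∞, where Z is a standard Gaussian random variable. -/
/-!
Write `ρ` for the standard Gaussian density. Since `ρ' = -x ρ`, the function `ρ f` has derivative
`ρ (f' - x f)` off a finite set. When that derivative is integrable, so is `ρ f` (because
`x ρ f = ρ f' - ρ (f' - x f)` is), hence `ρ f` vanishes at `±∞` and its derivative integrates to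
zero.

Conversely, for bounded continuous `h` with Gaussian mean `c`, Stein's equation
`f' - x f = h - c` has the solution `f = ρ⁻¹ ∫_{-∞}^x ρ (h - c)`, and the Mills ratio bound
`x ∫_x^∞ ρ ≤ ∫_x^∞ t ρ(t) dt = ρ(x)` makes `x f`, hence `f'`, bounded. Testing the hypothesis on
this `f` gives `E h(W) = c` for every such `h`, which determines the law of `W`.
-/

open MeasureTheory ProbabilityTheory Real Set

/-- `f` is continuous and piecewise continuously differentiable, with derivative `f'`
(outside a finite exceptional set). -/
def PiecewiseC1 (f f' : ℝ → ℝ) : Prop :=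
  Continuous f ∧ ∃ S : Finset ℝ,
    (∀ x ∉ S, HasDerivAt f (f' x) x) ∧ ContinuousOn f' ((S : Set ℝ)ᶜ)

open Filter Topology Asymptotics
open scoped BoundedContinuousFunction

local notation "ρ" => gaussianPDFReal 0 1
local notation "γ" => gaussianReal 0 1

theorem Continuous.integrable_of_integrable_id_mul {F : ℝ → ℝ} (hF : Continuous F)
    (h : Integrable (fun x ↦ x * F x)) : Integrable F := by
  refine hF.locallyIntegrable.integrable_of_isBigO_cocompact (g := fun x ↦ x * F x) ?_
    (h.integrableAtFilter _)
  refine IsBigO.of_bound 1 ?_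
  filter_upwards [tendsto_norm_cocompact_atTop.eventually_ge_atTop 1] with x hx
  rw [norm_mul, one_mul]
  exact le_mul_of_one_le_left (norm_nonneg _) hx

theorem integral_eq_zero_of_hasDerivAt_off_countable_of_integrable {F G : ℝ → ℝ} {s : Set ℝ}
    (hs : s.Countable) (hF : Continuous F) (hderiv : ∀ x ∉ s, HasDerivAt F (G x) x)
    (hFi : Integrable F) (hG : Integrable G) : ∫ x, G x = 0 := by
  have hFTC (b : ℝ) : ∫ x in (0 : ℝ)..b, G x = F b - F 0 :=
    integral_eq_of_hasDerivAt_off_countable F G hs hF.continuousOn (fun x hx ↦ hderiv x hx.2)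
      hG.intervalIntegrable
  have htop : Tendsto F atTop (𝓝 (F 0 + ∫ x in Ioi 0, G x)) :=
    ((intervalIntegral_tendsto_integral_Ioi 0 hG.integrableOn tendsto_id).const_add (F 0)).congr
      fun b ↦ by rw [id, hFTC]; ring
  have hbot : Tendsto F atBot (𝓝 (F 0 - ∫ x in Iic 0, G x)) :=
    ((intervalIntegral_tendsto_integral_Iic 0 hG.integrableOn tendsto_id).const_sub (F 0)).congr
      fun b ↦ by rw [id, intervalIntegral.integral_symm, hFTC]; ring
  have htop0 := (hFi.integrableAtFilter atTop).eq_zero_of_tendsto (fun t ht ↦ by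
    obtain ⟨b, hb⟩ := mem_atTop_sets.1 ht
    exact measure_mono_top hb volume_Ici) htop
  have hbot0 := (hFi.integrableAtFilter atBot).eq_zero_of_tendsto (fun t ht ↦ by
    obtain ⟨b, hb⟩ := mem_atBot_sets.1 ht
    exact measure_mono_top hb volume_Iic) hbot
  rw [← intervalIntegral.integral_Iic_add_Ioi hG.integrableOn hG.integrableOn]
  linarith

theorem gaussianPDFReal_zero_one (x : ℝ) : ρ x = (√(2 * π))⁻¹ * exp (-x ^ 2 / 2) := by
  simp [gaussianPDFReal]

theorem hasDerivAt_gaussianPDFReal_zero_one (x : ℝ) : HasDerivAt ρ (-x * ρ x) x := by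
  have hexponent : HasDerivAt (fun y : ℝ ↦ -y ^ 2 / 2) (-x) x := by
    simpa [neg_div] using (hasDerivAt_pow 2 x).neg.div_const 2
  rw [funext gaussianPDFReal_zero_one]
  exact (hexponent.exp.const_mul _).congr_deriv (by ring)

theorem continuous_gaussianPDFReal_zero_one : Continuous ρ :=
  continuous_iff_continuousAt.2 fun x ↦ (hasDerivAt_gaussianPDFReal_zero_one x).continuousAt

theorem gaussianPDFReal_zero_one_neg (x : ℝ) : ρ (-x) = ρ x := by
  simp [gaussianPDFReal_zero_one]

theorem tendsto_gaussianPDFReal_zero_one_atTop : Tendsto ρ atTop (𝓝 0) := by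
  simp_rw [funext gaussianPDFReal_zero_one]
  have : Tendsto (fun x : ℝ ↦ -x ^ 2 / 2) atTop atBot :=
    (tendsto_neg_atTop_atBot.comp (tendsto_pow_atTop two_ne_zero)).atBot_div_const two_pos
  simpa using (tendsto_exp_atBot.comp this).const_mul (√(2 * π))⁻¹

theorem integrable_gaussianReal_iff {g : ℝ → ℝ} :
    Integrable g γ ↔ Integrable (fun x ↦ ρ x * g x) := by
  rw [gaussianReal_of_var_ne_zero 0 one_ne_zero,
    integrable_withDensity_iff_integrable_smul' (measurable_gaussianPDF 0 1)
      (ae_of_all _ fun _ ↦ gaussianPDF_lt_top)]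
  simp [toReal_gaussianPDF]

theorem integral_gaussianReal_eq {g : ℝ → ℝ} : ∫ x, g x ∂γ = ∫ x, ρ x * g x :=
  integral_gaussianReal_eq_integral_smul one_ne_zero

theorem integrable_id_mul_gaussianPDFReal_zero_one : Integrable fun x ↦ x * ρ x := by
  refine ((integrable_mul_exp_neg_mul_sq (b := 1 / 2) (by norm_num)).const_mul
    (√(2 * π))⁻¹).congr (ae_of_all _ fun x ↦ ?_)
  simp only [gaussianPDFReal_zero_one]
  ring_nf

theorem integral_Ioi_id_mul_gaussianPDFReal_zero_one (x : ℝ) : ∫ t in Ioi x, t * ρ t = ρ x := by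
  have hderiv (t : ℝ) : HasDerivAt (fun t ↦ -ρ t) (t * ρ t) t :=
    (hasDerivAt_gaussianPDFReal_zero_one t).neg.congr_deriv (by ring)
  rw [integral_Ioi_of_hasDerivAt_of_tendsto' (fun t _ ↦ hderiv t)
    integrable_id_mul_gaussianPDFReal_zero_one.integrableOn
    tendsto_gaussianPDFReal_zero_one_atTop.neg]
  simp

theorem abs_mul_setIntegral_Ioi_gaussianPDFReal_mul_le {g : ℝ → ℝ} {B x : ℝ}
    (hg : ∀ t, |g t| ≤ B) (hx : 0 ≤ x) : |x * ∫ t in Ioi x, ρ t * g t| ≤ B * ρ x := by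
  have hbound : ∀ᵐ t ∂volume.restrict (Ioi x), ‖x * (ρ t * g t)‖ ≤ B * (t * ρ t) := by
    refine (ae_restrict_mem measurableSet_Ioi).mono fun t (ht : x < t) ↦ ?_
    have hρ := gaussianPDFReal_nonneg 0 1 t
    rw [Real.norm_eq_abs, abs_mul, abs_mul, abs_of_nonneg hx, abs_of_nonneg hρ]
    calc x * (ρ t * |g t|) ≤ t * (ρ t * B) :=
          mul_le_mul ht.le (mul_le_mul_of_nonneg_left (hg t) hρ) (by positivity) (hx.trans ht.le)
      _ = B * (t * ρ t) := by ring
  calc |x * ∫ t in Ioi x, ρ t * g t| = ‖∫ t in Ioi x, x * (ρ t * g t)‖ := by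
        rw [integral_const_mul, Real.norm_eq_abs]
    _ ≤ ∫ t in Ioi x, B * (t * ρ t) := norm_integral_le_of_norm_le
        (integrable_id_mul_gaussianPDFReal_zero_one.integrableOn.const_mul B) hbound
    _ = B * ρ x := by rw [integral_const_mul, integral_Ioi_id_mul_gaussianPDFReal_zero_one]

theorem hasDerivAt_setIntegral_Iic {φ : ℝ → ℝ} (hφ : Continuous φ) (hint : Integrable φ)
    (x : ℝ) : HasDerivAt (fun y ↦ ∫ t in Iic y, φ t) (φ x) x := by
  have hsplit : (fun y ↦ ∫ t in Iic y, φ t) =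
      fun y ↦ (∫ t in Iic 0, φ t) + ∫ t in (0 : ℝ)..y, φ t := by
    ext y
    rw [← intervalIntegral.integral_Iic_sub_Iic hint.integrableOn hint.integrableOn]
    ring
  rw [hsplit]
  exact (intervalIntegral.integral_hasDerivAt_right hint.intervalIntegrable
    hφ.stronglyMeasurable.stronglyMeasurableAtFilter hφ.continuousAt).const_add _

theorem abs_mul_setIntegral_Iic_gaussianPDFReal_mul_le {g : ℝ → ℝ} {B : ℝ}
    (hg : ∀ t, |g t| ≤ B) (hint : Integrable g γ) (hzero : ∫ t, g t ∂γ = 0) (x : ℝ) :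
    |x * ∫ t in Iic x, ρ t * g t| ≤ B * ρ x := by
  rw [integrable_gaussianReal_iff] at hint
  rw [integral_gaussianReal_eq] at hzero
  rcases le_total 0 x with hx | hx
  · have hIic : ∫ t in Iic x, ρ t * g t = -∫ t in Ioi x, ρ t * g t := by
      linarith [intervalIntegral.integral_Iic_add_Ioi (b := x) hint.integrableOn hint.integrableOn]
    rw [hIic, mul_neg, abs_neg]
    exact abs_mul_setIntegral_Ioi_gaussianPDFReal_mul_le hg hx
  · have hIic : ∫ t in Iic x, ρ t * g t = ∫ t in Ioi (-x), ρ t * g (-t) := by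
      rw [← integral_comp_neg_Iic]
      simp only [neg_neg, gaussianPDFReal_zero_one_neg]
    have h := abs_mul_setIntegral_Ioi_gaussianPDFReal_mul_le (fun t ↦ hg (-t)) (neg_nonneg.2 hx)
    rwa [gaussianPDFReal_zero_one_neg, neg_mul, abs_neg, ← hIic] at h

/-- For centred `g`, the bounded solution of Stein's equation `f' - x f = g`: it is obtained by
integrating `(ρ f)' = ρ (f' - x f) = ρ g` from `-∞`. -/
noncomputable def steinSolution (g : ℝ → ℝ) (x : ℝ) : ℝ :=
  (ρ x)⁻¹ * ∫ t in Iic x, ρ t * g t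

theorem abs_mul_steinSolution_le {g : ℝ → ℝ} {B : ℝ} (hg : ∀ t, |g t| ≤ B)
    (hint : Integrable g γ) (hzero : ∫ t, g t ∂γ = 0) (x : ℝ) :
    |x * steinSolution g x| ≤ B := by
  have hρ := gaussianPDFReal_pos 0 1 x one_ne_zero
  have h := abs_mul_setIntegral_Iic_gaussianPDFReal_mul_le hg hint hzero x
  rw [steinSolution, mul_left_comm, abs_mul, abs_inv, abs_of_pos hρ]
  calc (ρ x)⁻¹ * |x * ∫ t in Iic x, ρ t * g t| ≤ (ρ x)⁻¹ * (B * ρ x) := by gcongr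
    _ = B := by field_simp

theorem hasDerivAt_steinSolution {g : ℝ → ℝ} (hg : Continuous g) (hint : Integrable g γ)
    (x : ℝ) : HasDerivAt (steinSolution g) (x * steinSolution g x + g x) x := by
  have hρ := (gaussianPDFReal_pos 0 1 x one_ne_zero).ne'
  have hI := hasDerivAt_setIntegral_Iic (continuous_gaussianPDFReal_zero_one.mul hg)
    (integrable_gaussianReal_iff.1 hint) x
  refine ((hasDerivAt_gaussianPDFReal_zero_one x).inv hρ |>.mul hI).congr_deriv ?_
  simp only [steinSolution, Pi.mul_apply, Pi.inv_apply]
  field_simp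

theorem integral_stein_gaussianReal {f f' : ℝ → ℝ} (hf : PiecewiseC1 f f')
    (hf' : Integrable f' γ) : ∫ x, (f' x - x * f x) ∂γ = 0 := by
  obtain ⟨hfc, S, hderiv, -⟩ := hf
  rw [integral_gaussianReal_eq]
  by_cases hG : Integrable fun x ↦ ρ x * (f' x - x * f x)
  swap
  · exact integral_undef hG
  have hF : Integrable fun x ↦ ρ x * f x :=
    (continuous_gaussianPDFReal_zero_one.mul hfc).integrable_of_integrable_id_mul <|
      ((integrable_gaussianReal_iff.1 hf').sub hG).congr (ae_of_all _ fun x ↦ by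
        simp only [Pi.sub_apply, Pi.mul_apply]; ring)
  refine integral_eq_zero_of_hasDerivAt_off_countable_of_integrable S.countable_toSet
    (continuous_gaussianPDFReal_zero_one.mul hfc) (fun x hx ↦ ?_) hF hG
  exact ((hasDerivAt_gaussianPDFReal_zero_one x).mul (hderiv x hx)).congr_deriv (by ring)

theorem eq_gaussianReal_of_integral_stein {μ : Measure ℝ} [IsProbabilityMeasure μ]
    (hstein : ∀ (f : ℝ → ℝ) (f' : ℝ →ᵇ ℝ), (∀ x, HasDerivAt f (f' x) x) →
      ∫ x, (f' x - x * f x) ∂μ = 0) :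
    μ = γ := by
  refine ext_of_forall_integral_eq_of_IsFiniteMeasure fun h ↦ ?_
  set c := ∫ x, h x ∂γ
  set g := fun x ↦ h x - c
  have hg : ∀ x, |g x| ≤ 2 * ‖h‖ := fun x ↦
    calc |h x - c| ≤ |h x| + |c| := abs_sub _ _
      _ ≤ ‖h‖ + ‖h‖ := add_le_add (h.norm_coe_le_norm x) (h.norm_integral_le_norm γ)
      _ = 2 * ‖h‖ := by ring
  have hgi : Integrable g γ := (h.integrable γ).sub (integrable_const c)
  have hg0 : ∫ x, g x ∂γ = 0 := by
    simp [g, integral_sub (h.integrable γ) (integrable_const c), c]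
  have hderiv := hasDerivAt_steinSolution (h.continuous.sub continuous_const) hgi
  have hcont : Continuous fun x ↦ x * steinSolution g x + g x :=
    (continuous_id.mul (continuous_iff_continuousAt.2 fun x ↦ (hderiv x).continuousAt)).add
      (h.continuous.sub continuous_const)
  let f' : ℝ →ᵇ ℝ := .ofNormedAddCommGroup (fun x ↦ x * steinSolution g x + g x) hcont
    (2 * ‖h‖ + 2 * ‖h‖) fun x ↦ (norm_add_le _ _).trans
      (add_le_add (abs_mul_steinSolution_le hg hgi hg0 x) (hg x))
  have hμ := hstein (steinSolution g) f' hderiv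
  simp only [f', BoundedContinuousFunction.coe_ofNormedAddCommGroup, add_sub_cancel_left, g,
    integral_sub (h.integrable μ) (integrable_const c), integral_const, probReal_univ,
    smul_eq_mul, one_mul] at hμ
  linarith

/-- A real-valued random variable `W` has the standard Gaussian distribution `N(0,1)` if, and
only if, `E[f'(W) − W f(W)] = 0` for every continuous, piecewise continuously differentiable
`f : ℝ → ℝ` with `E|f'(Z)| < ∞`, `Z` standard Gaussian. -/
theorem stein_characterization_gaussian
    {Ω : Type*} [MeasurableSpace Ω] (P : Measure Ω) [IsProbabilityMeasure P]
    (W : Ω → ℝ) (hW : Measurable W) :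
    P.map W = gaussianReal 0 1 ↔
      ∀ f f' : ℝ → ℝ, PiecewiseC1 f f' →
        Integrable f' (gaussianReal 0 1) →
        ∫ ω, (f' (W ω) - W ω * f (W ω)) ∂P = 0 := by
  constructor
  · intro hmap f f' hf hf'
    have hmeas : AEStronglyMeasurable (fun x ↦ f' x - x * f x) (P.map W) :=
      hmap ▸ hf'.aestronglyMeasurable.sub (continuous_id.mul hf.1).aestronglyMeasurable
    rw [← integral_map hW.aemeasurable hmeas, hmap]
    exact integral_stein_gaussianReal hf hf'
  · intro hstein
    have := Measure.isProbabilityMeasure_map (μ := P) hW.aemeasurable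
    refine eq_gaussianReal_of_integral_stein fun f f' hf ↦ ?_
    have hfc : Continuous f := continuous_iff_continuousAt.2 fun x ↦ (hf x).continuousAt
    have hmeas : AEStronglyMeasurable (fun x ↦ f' x - x * f x) (P.map W) :=
      (f'.continuous.sub (continuous_id.mul hfc)).aestronglyMeasurable
    rw [integral_map hW.aemeasurable hmeas]
    exact hstein f f' ⟨hfc, ∅, fun x _ ↦ hf x, f'.continuous.continuousOn⟩ (f'.integrable _)
end

section
/- Let −∞ ≤ a < 0 < b ≤ +∞ and let τ : ℝ → ℝ be continuous, nonnegative, with τ(x) > 0 iff x ∈ (a,b), satisfying ∫₀^b (y/τ(y)) dy = +∞ and ∫_a^0 (y/τ(y)) dy = −∞, and let p_τ and E_τ(h) be defined accordingly. For every bounded piecewise continuous h : ℝ → ℝ, let U_τ h be the unique solution of the Stein equation τ(x) f'(x) − x f(x) = h(x) − E_τ(h) which is bounded and continuous on (a,b), given by U_τ h(x) = ∫_a^x (h(y) − E_τ(h)) exp(∫_y^x (z/τ(z)) dz)/τ(y) dy for x ∈ (a,b). Then sup_{x∈(a,b)} ( |x · U_τ h(x)| + |τ(x) · (U_τ h)'(x)|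 ) ≤ 6 sup_{x∈(a,b)} |h(x)|. -/
open MeasureTheory Real Set

/-- The density `p_τ(x) = C⁻¹ exp(−∫₀^x y/τ(y) dy)/τ(x) · 1_{(a,b)}(x)` associated with `τ`. -/
noncomputable def pTau (a b : EReal) (τ : ℝ → ℝ) (x : ℝ) : ℝ :=
  if a < (x : EReal) ∧ (x : EReal) < b then
    (Real.exp (-∫ y in (0 : ℝ)..x, y / τ y) / τ x) /
      (∫ z in {z : ℝ | a < (z : EReal) ∧ (z : EReal) < b},
        Real.exp (-∫ y in (0 : ℝ)..z, y / τ y) / τ z)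
  else 0

/-- `E_τ(h) = ∫ h(y) p_τ(y) dy`. -/
noncomputable def ETau (a b : EReal) (τ h : ℝ → ℝ) : ℝ :=
  ∫ y, h y * pTau a b τ y

/-- The solution `U_τ h (x) = ∫_a^x (h(y) − E_τ(h)) exp(∫_y^x z/τ(z) dz)/τ(y) dy` of the
Stein equation associated with `τ` and `h`. -/
noncomputable def UTau (a b : EReal) (τ h : ℝ → ℝ) (x : ℝ) : ℝ :=
  ∫ y in {y : ℝ | a < (y : EReal) ∧ y < x},
    (h y - ETau a b τ h) * Real.exp (∫ z in y..x, z / τ z) / τ y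

/-!
With `F x = ∫₀ˣ y / τ y` and the unnormalised density `q = exp (-F) / τ` one has
`(exp (-F))' = -x q` and `U_τ h = exp F · G`, where `G x = ∫_a^x (h - E_τ h) q`; as `h - E_τ h` has
`q`-mean zero, also `G x = -∫_x^b (h - E_τ h) q`. Integrating `|y| q(y) ≥ |x| q(y)` over the tail
beyond `x` gives `|x| ∫ q ≤ exp (-F x)` there, so `|h - E_τ h| ≤ 2M` yields `|x U_τ h x| ≤ 2M`.
The increments of `G = exp (-F) U_τ h` are dominated by those of `2M ∫ q`, so `|G'| ≤ 2M q`, which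
reads `|τ (U_τ h)' - x U_τ h| ≤ 2M`. This holds at the jumps of `h` too, and gives
`|τ (U_τ h)'| ≤ 4M`.
-/

open Filter Topology

theorem ContinuousOn.aestronglyMeasurable_of_countable_compl {α β : Type*} [MeasurableSpace α]
    [TopologicalSpace α] [OpensMeasurableSpace α] [MeasurableSingletonClass α] [TopologicalSpace β]
    [TopologicalSpace.PseudoMetrizableSpace β] [SecondCountableTopologyEither α β]
    {μ : Measure α} [NullSingletonClass μ] {f : α → β} {s : Set α} (hs : s.Countable) (hf : ContinuousOn f sᶜ) :
    AEStronglyMeasurable f μ := by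
  have hf' := hf.aestronglyMeasurable (μ := μ) hs.measurableSet.compl
  rwa [Measure.restrict_eq_self_of_ae_mem (s := sᶜ) (compl_mem_ae_iff.2 (hs.measure_zero _))]
    at hf'

theorem ContinuousOn.hasDerivAt_intervalIntegral {E : Type*} [NormedAddCommGroup E]
    [NormedSpace ℝ E] [CompleteSpace E] {f : ℝ → E} {s : Set ℝ} (hf : ContinuousOn f s)
    (hs : IsOpen s) (hs' : s.OrdConnected) {c x : ℝ} (hc : c ∈ s) (hx : x ∈ s) :
    HasDerivAt (fun t => ∫ y in c..t, f y) (f x) x :=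
  intervalIntegral.integral_hasDerivAt_right ((hf.mono (hs'.uIcc_subset hc hx)).intervalIntegrable)
    (hf.stronglyMeasurableAtFilter hs x hx) (hf.continuousAt (hs.mem_nhds hx))

theorem norm_le_of_hasDerivAt_of_norm_sub_le {E : Type*} [NormedAddCommGroup E]
    [NormedSpace ℝ E] {G : ℝ → E} {Ψ : ℝ → ℝ} {g : E} {ψ x : ℝ} (hG : HasDerivAt G g x)
    (hΨ : HasDerivAt Ψ ψ x) (hle : ∀ᶠ t in 𝓝[>] x, ‖G t - G x‖ ≤ Ψ t - Ψ x) : ‖g‖ ≤ ψ := by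
  have hGs := (hasDerivWithinAt_iff_tendsto_slope' self_notMem_Ioi).1 hG.hasDerivWithinAt
  have hΨs := (hasDerivWithinAt_iff_tendsto_slope' self_notMem_Ioi).1 hΨ.hasDerivWithinAt
  refine le_of_tendsto_of_tendsto hGs.norm hΨs ?_
  filter_upwards [hle, self_mem_nhdsWithin] with t ht hxt
  have hxt' : 0 < t - x := sub_pos.2 hxt
  rw [slope_def_module, slope_def_field, norm_smul, norm_inv, Real.norm_of_nonneg hxt'.le,
    inv_mul_eq_div]
  exact div_le_div_of_nonneg_right ht hxt'.le

theorem MeasureTheory.AECover.integrable_and_integral_le {α ι : Type*} [MeasurableSpace α]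
    {μ : Measure α} {l : Filter ι} [l.NeBot] [l.IsCountablyGenerated] {φ : ι → Set α}
    (hφ : AECover μ l φ) {f : α → ℝ} (hfi : ∀ i, IntegrableOn f (φ i) μ) (hf : 0 ≤ᵐ[μ] f)
    {I : ℝ} (hI : ∀ i, ∫ x in φ i, f x ∂μ ≤ I) : Integrable f μ ∧ ∫ x, f x ∂μ ≤ I := by
  have hint := hφ.integrable_of_integral_bounded_of_nonneg_ae I hfi hf (.of_forall hI)
  exact ⟨hint, le_of_tendsto (hφ.integral_tendsto_of_countably_generated hint) (.of_forall hI)⟩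

theorem MeasureTheory.IntegrableOn.of_const_mul_le {α : Type*} [MeasurableSpace α]
    {μ : Measure α} {f g : α → ℝ} {T : Set α} {c : ℝ} (hg : IntegrableOn g T μ) (hc : 0 < c)
    (hT : MeasurableSet T) (hf : AEStronglyMeasurable f (μ.restrict T)) (hf0 : ∀ y ∈ T, 0 ≤ f y)
    (hfg : ∀ y ∈ T, c * f y ≤ g y) :
    IntegrableOn f T μ ∧ c * ∫ y in T, f y ∂μ ≤ ∫ y in T, g y ∂μ := by
  have hfi : IntegrableOn f T μ :=
    (hg.div_const c).mono' hf (ae_restrict_of_forall_mem hT fun y hy => by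
      rw [Real.norm_of_nonneg (hf0 y hy), le_div_iff₀ hc, mul_comm]
      exact hfg y hy)
  refine ⟨hfi, ?_⟩
  rw [← integral_const_mul]
  exact setIntegral_mono_on (hfi.const_mul c) hg hT hfg

def realIoo (a b : EReal) : Set ℝ := (↑) ⁻¹' Ioo a b

section realIoo

variable {a b : EReal}

theorem mem_realIoo {x : ℝ} : x ∈ realIoo a b ↔ a < x ∧ (x : EReal) < b := Iff.rfl

theorem isOpen_realIoo : IsOpen (realIoo a b) := isOpen_Ioo.preimage continuous_coe_real_ereal

theorem measurableSet_realIoo : MeasurableSet (realIoo a b) := isOpen_realIoo.measurableSet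

theorem ordConnected_realIoo : (realIoo a b).OrdConnected :=
  ordConnected_Ioo.preimage_mono fun _ _ => EReal.coe_le_coe_iff.2

theorem realIoo_inter_Iio {x : ℝ} (hx : (x : EReal) ≤ b) : realIoo a b ∩ Iio x = realIoo a x := by
  ext y
  simp only [mem_inter_iff, mem_realIoo, mem_Iio, EReal.coe_lt_coe_iff]
  exact ⟨fun hy => ⟨hy.1.1, hy.2⟩,
    fun hy => ⟨⟨hy.1, (EReal.coe_lt_coe_iff.2 hy.2).trans_le hx⟩, hy.2⟩⟩

theorem setIntegral_realIoo_sub_eq_intervalIntegral {f : ℝ → ℝ} {x t : ℝ} (hax : a < x)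
    (hxt : x ≤ t) (hf : IntegrableOn f (realIoo a t)) :
    (∫ y in realIoo a t, f y) - ∫ y in realIoo a x, f y = ∫ y in x..t, f y := by
  have hright : realIoo a t \ Iio x = Ico x t := by
    ext y
    simp only [Set.mem_sdiff, mem_Ico, mem_realIoo, mem_Iio, not_lt, EReal.coe_lt_coe_iff]
    exact ⟨fun hy => ⟨hy.2, hy.1.2⟩,
      fun hy => ⟨⟨hax.trans_le (EReal.coe_le_coe_iff.2 hy.1), hy.2⟩, hy.1⟩⟩
  have hsplit :
      (∫ y in realIoo a x, f y) + ∫ y in realIoo a t \ Iio x, f y = ∫ y in realIoo a t, f y := by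
    rw [← realIoo_inter_Iio (EReal.coe_le_coe_iff.2 hxt)]
    exact integral_inter_add_sdiff measurableSet_Iio hf
  rw [hright, integral_Ico_eq_integral_Ioc, ← intervalIntegral.integral_of_le hxt] at hsplit
  linarith

theorem exists_seq_mem_realIoo_tendsto (hab : a < b) :
    ∃ u v : ℕ → ℝ, (∀ n, u n ∈ realIoo a b ∧ v n ∈ realIoo a b) ∧
      Tendsto (fun n => (u n : EReal)) atTop (𝓝 a) ∧
      Tendsto (fun n => (v n : EReal)) atTop (𝓝 b) := by
  obtain ⟨u, -, hu, hu_lim⟩ := exists_seq_strictAnti_tendsto' hab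
  obtain ⟨v, -, hv, hv_lim⟩ := exists_seq_strictMono_tendsto' hab
  have hreal : ∀ {w : EReal}, w ∈ Ioo a b → (w.toReal : EReal) = w := fun hw =>
    EReal.coe_toReal (hw.2.trans_le le_top).ne (bot_le.trans_lt hw.1).ne'
  refine ⟨fun n => (u n).toReal, fun n => (v n).toReal, fun n => ⟨?_, ?_⟩,
    hu_lim.congr fun n => (hreal (hu n)).symm, hv_lim.congr fun n => (hreal (hv n)).symm⟩
  · show ((u n).toReal : EReal) ∈ Ioo a b
    rw [hreal (hu n)]
    exact hu n
  · show ((v n).toReal : EReal) ∈ Ioo a b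
    rw [hreal (hv n)]
    exact hv n

theorem integrableOn_realIoo_of_intervalIntegral_le (hab : a < b) {f : ℝ → ℝ}
    (hf : ContinuousOn f (realIoo a b)) (hf0 : ∀ y ∈ realIoo a b, 0 ≤ f y) {I : ℝ}
    (hI : ∀ u ∈ realIoo a b, ∀ v ∈ realIoo a b, u ≤ v → ∫ y in u..v, f y ≤ I) :
    IntegrableOn f (realIoo a b) ∧ ∫ y in realIoo a b, f y ≤ I := by
  obtain ⟨u, v, huv, hu, hv⟩ := exists_seq_mem_realIoo_tendsto hab
  have hsub : ∀ n, Icc (u n) (v n) ⊆ realIoo a b := fun n =>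
    ordConnected_realIoo.out (huv n).1 (huv n).2
  have hrestrict : ∀ n, (volume.restrict (realIoo a b)).restrict (Ioo (u n) (v n)) =
      volume.restrict (Ioo (u n) (v n)) := fun n => by
    rw [Measure.restrict_restrict measurableSet_Ioo,
      inter_eq_left.2 (Ioo_subset_Icc_self.trans (hsub n))]
  have hcover : AECover (volume.restrict (realIoo a b)) atTop fun n => Ioo (u n) (v n) :=
    ⟨ae_restrict_of_forall_mem measurableSet_realIoo fun y hy =>
      ((hu.eventually (gt_mem_nhds hy.1)).and (hv.eventually (lt_mem_nhds hy.2))).mono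
        fun n hn => ⟨EReal.coe_lt_coe_iff.1 hn.1, EReal.coe_lt_coe_iff.1 hn.2⟩,
      fun n => measurableSet_Ioo⟩
  refine hcover.integrable_and_integral_le (fun n => ?_)
    (ae_restrict_of_forall_mem measurableSet_realIoo hf0) fun n => ?_
  · rw [IntegrableOn, hrestrict]
    exact (hf.mono (hsub n)).integrableOn_Icc.mono_set Ioo_subset_Icc_self
  · rw [hrestrict]
    rcases le_or_gt (u n) (v n) with hle | hlt
    · rw [← integral_Ioc_eq_integral_Ioo, ← intervalIntegral.integral_of_le hle]
      exact hI _ (huv n).1 _ (huv n).2 hle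
    · rw [Ioo_eq_empty hlt.not_gt, Measure.restrict_empty, integral_zero_measure]
      simpa using hI _ (huv n).1 _ (huv n).1 le_rfl

end realIoo

structure SteinKernel (a b : EReal) (τ : ℝ → ℝ) : Prop where
  lt_zero : a < 0
  zero_lt : 0 < b
  continuousOn : ContinuousOn τ (realIoo a b)
  pos : ∀ x ∈ realIoo a b, 0 < τ x

noncomputable def steinPotential (τ : ℝ → ℝ) (x : ℝ) : ℝ := ∫ y in (0 : ℝ)..x, y / τ y

noncomputable def steinWeight (τ : ℝ → ℝ) (x : ℝ) : ℝ := exp (-steinPotential τ x) / τ x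

theorem ETau_eq (a b : EReal) (τ h : ℝ → ℝ) :
    ETau a b τ h = (∫ y in realIoo a b, h y * steinWeight τ y) /
      ∫ y in realIoo a b, steinWeight τ y := by
  have hp : ∀ y, h y * pTau a b τ y = (realIoo a b).indicator
      (fun y => h y * steinWeight τ y / ∫ z in realIoo a b, steinWeight τ z) y := by
    intro y
    by_cases hy : a < (y : EReal) ∧ (y : EReal) < b
    · rw [indicator_of_mem (s := realIoo a b) hy, pTau, if_pos hy, mul_div_assoc]
      rfl
    · rw [indicator_of_notMem (s := realIoo a b) hy, pTau, if_neg hy, mul_zero]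
  rw [ETau, integral_congr_ae (.of_forall hp), integral_indicator measurableSet_realIoo,
    integral_div]

namespace SteinKernel

variable {a b : EReal} {τ h : ℝ → ℝ} {M : ℝ}

theorem zero_mem (hτ : SteinKernel a b τ) : (0 : ℝ) ∈ realIoo a b :=
  ⟨by simpa using hτ.lt_zero, by simpa using hτ.zero_lt⟩

theorem continuousOn_div (hτ : SteinKernel a b τ) :
    ContinuousOn (fun y => y / τ y) (realIoo a b) :=
  continuousOn_id.div hτ.continuousOn fun y hy => (hτ.pos y hy).ne'

theorem hasDerivAt_steinPotential (hτ : SteinKernel a b τ) {x : ℝ} (hx : x ∈ realIoo a b) :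
    HasDerivAt (steinPotential τ) (x / τ x) x :=
  hτ.continuousOn_div.hasDerivAt_intervalIntegral isOpen_realIoo ordConnected_realIoo
    hτ.zero_mem hx

theorem steinWeight_pos (hτ : SteinKernel a b τ) {x : ℝ} (hx : x ∈ realIoo a b) :
    0 < steinWeight τ x :=
  div_pos (exp_pos _) (hτ.pos x hx)

theorem continuousOn_steinWeight (hτ : SteinKernel a b τ) :
    ContinuousOn (steinWeight τ) (realIoo a b) :=
  have hF : ContinuousOn (steinPotential τ) (realIoo a b) := fun _ hx =>
    (hτ.hasDerivAt_steinPotential hx).continuousAt.continuousWithinAt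
  hF.neg.rexp.div hτ.continuousOn fun y hy => (hτ.pos y hy).ne'

theorem hasDerivAt_exp_neg_steinPotential (hτ : SteinKernel a b τ) {x : ℝ}
    (hx : x ∈ realIoo a b) :
    HasDerivAt (fun t => exp (-steinPotential τ t)) (-(x * steinWeight τ x)) x := by
  refine (hτ.hasDerivAt_steinPotential hx).neg.exp.congr_deriv ?_
  rw [steinWeight, Pi.neg_apply]
  ring

theorem integral_mul_steinWeight (hτ : SteinKernel a b τ) {u v : ℝ} (hu : u ∈ realIoo a b)
    (hv : v ∈ realIoo a b) :
    ∫ y in u..v, y * steinWeight τ y = exp (-steinPotential τ u) - exp (-steinPotential τ v) := by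
  have hsub := ordConnected_realIoo.uIcc_subset hu hv
  rw [intervalIntegral.integral_eq_sub_of_hasDerivAt (f := fun t => -exp (-steinPotential τ t))
    (f' := fun y => y * steinWeight τ y)
    (fun y hy => by simpa using (hτ.hasDerivAt_exp_neg_steinPotential (hsub hy)).fun_neg)
    ((continuousOn_id.mul hτ.continuousOn_steinWeight).mono hsub).intervalIntegrable]
  ring

theorem integrableOn_steinWeight_left (hτ : SteinKernel a b τ) {x : ℝ} (hx : x ∈ realIoo a b)
    (hx0 : x < 0) :
    IntegrableOn (steinWeight τ) (realIoo a x) ∧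
      -x * ∫ y in realIoo a x, steinWeight τ y ≤ exp (-steinPotential τ x) := by
  have hsub : realIoo a x ⊆ realIoo a b := fun y hy => ⟨hy.1, hy.2.trans hx.2⟩
  have hyx : ∀ y ∈ realIoo a x, y < x := fun y hy => EReal.coe_lt_coe_iff.1 hy.2
  have hq := hτ.continuousOn_steinWeight.mono hsub
  obtain ⟨hint, hle⟩ := integrableOn_realIoo_of_intervalIntegral_le hx.1
    (f := fun y => -y * steinWeight τ y) ((continuousOn_id.neg).mul hq)
    (fun y hy => mul_nonneg (by linarith [hyx y hy]) (hτ.steinWeight_pos (hsub hy)).le)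
    fun u hu v hv _ => by
      -- `exp (-F)` has derivative `-y q ≥ 0` on `(a, x)`, so the integral is at most
      -- `exp (-F v) ≤ exp (-F x)`
      have hvx : 0 ≤ ∫ y in v..x, -y * steinWeight τ y :=
        intervalIntegral.integral_nonneg (hyx v hv).le fun y hy => mul_nonneg (by linarith [hy.2])
          (hτ.steinWeight_pos (ordConnected_realIoo.out (hsub hv) hx hy)).le
      simp only [neg_mul, intervalIntegral.integral_neg,
        hτ.integral_mul_steinWeight (hsub hu) (hsub hv), hτ.integral_mul_steinWeight (hsub hv) hx]
        at hvx ⊢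
      linarith [exp_pos (-steinPotential τ u)]
  obtain ⟨hqint, hq_le⟩ := hint.of_const_mul_le (neg_pos.2 hx0) measurableSet_realIoo
    (hq.aestronglyMeasurable measurableSet_realIoo)
    (fun y hy => (hτ.steinWeight_pos (hsub hy)).le)
    fun y hy =>
      mul_le_mul_of_nonneg_right (by linarith [hyx y hy]) (hτ.steinWeight_pos (hsub hy)).le
  exact ⟨hqint, hq_le.trans hle⟩

theorem integrableOn_steinWeight_right (hτ : SteinKernel a b τ) {x : ℝ} (hx : x ∈ realIoo a b)
    (hx0 : 0 < x) :
    IntegrableOn (steinWeight τ) (realIoo x b) ∧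
      x * ∫ y in realIoo x b, steinWeight τ y ≤ exp (-steinPotential τ x) := by
  have hsub : realIoo x b ⊆ realIoo a b := fun y hy => ⟨hx.1.trans hy.1, hy.2⟩
  have hxy : ∀ y ∈ realIoo x b, x < y := fun y hy => EReal.coe_lt_coe_iff.1 hy.1
  have hq := hτ.continuousOn_steinWeight.mono hsub
  obtain ⟨hint, hle⟩ := integrableOn_realIoo_of_intervalIntegral_le hx.2
    (f := fun y => y * steinWeight τ y) (continuousOn_id.mul hq)
    (fun y hy => mul_nonneg (by linarith [hxy y hy]) (hτ.steinWeight_pos (hsub hy)).le)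
    fun u hu v hv _ => by
      have hxu : 0 ≤ ∫ y in x..u, y * steinWeight τ y :=
        intervalIntegral.integral_nonneg (hxy u hu).le fun y hy => mul_nonneg (by linarith [hy.1])
          (hτ.steinWeight_pos (ordConnected_realIoo.out hx (hsub hu) hy)).le
      rw [hτ.integral_mul_steinWeight (hsub hu) (hsub hv)]
      rw [hτ.integral_mul_steinWeight hx (hsub hu)] at hxu
      linarith [exp_pos (-steinPotential τ v)]
  obtain ⟨hqint, hq_le⟩ := hint.of_const_mul_le hx0 measurableSet_realIoo
    (hq.aestronglyMeasurable measurableSet_realIoo)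
    (fun y hy => (hτ.steinWeight_pos (hsub hy)).le)
    fun y hy => mul_le_mul_of_nonneg_right (hxy y hy).le (hτ.steinWeight_pos (hsub hy)).le
  exact ⟨hqint, hq_le.trans hle⟩

theorem integrableOn_steinWeight (hτ : SteinKernel a b τ) :
    IntegrableOn (steinWeight τ) (realIoo a b) := by
  obtain ⟨c, hac, hc0⟩ := EReal.exists_between_coe_real hτ.lt_zero
  obtain ⟨d, hd0, hdb⟩ := EReal.exists_between_coe_real hτ.zero_lt
  have hc : c ∈ realIoo a b := ⟨hac, hc0.trans hτ.zero_lt⟩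
  have hd : d ∈ realIoo a b := ⟨hτ.lt_zero.trans hd0, hdb⟩
  have hmiddle : IntegrableOn (steinWeight τ) (Icc c d) :=
    (hτ.continuousOn_steinWeight.mono (ordConnected_realIoo.out hc hd)).integrableOn_Icc
  refine (((hτ.integrableOn_steinWeight_left hc (by exact_mod_cast hc0)).1.union hmiddle).union
    (hτ.integrableOn_steinWeight_right hd (by exact_mod_cast hd0)).1).mono_set fun y hy => ?_
  rcases lt_or_ge y c with hyc | hcy
  · exact .inl (.inl ⟨hy.1, EReal.coe_lt_coe_iff.2 hyc⟩)
  rcases le_or_gt y d with hyd | hdy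
  · exact .inl (.inr ⟨hcy, hyd⟩)
  · exact .inr ⟨EReal.coe_lt_coe_iff.2 hdy, hy.2⟩

theorem integral_steinWeight_pos (hτ : SteinKernel a b τ) :
    0 < ∫ y in realIoo a b, steinWeight τ y := by
  rw [setIntegral_pos_iff_support_of_nonneg_ae (ae_restrict_of_forall_mem measurableSet_realIoo
      fun y hy => (hτ.steinWeight_pos hy).le) hτ.integrableOn_steinWeight]
  have hsupp : Function.support (steinWeight τ) ∩ realIoo a b = realIoo a b :=
    inter_eq_right.2 fun y hy => (hτ.steinWeight_pos hy).ne'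
  rw [hsupp]
  exact isOpen_realIoo.measure_pos volume ⟨0, hτ.zero_mem⟩

theorem integrableOn_mul_steinWeight (hτ : SteinKernel a b τ) (hh : AEStronglyMeasurable h)
    (hM : ∀ y ∈ realIoo a b, |h y| ≤ M) :
    IntegrableOn (fun y => h y * steinWeight τ y) (realIoo a b) :=
  hτ.integrableOn_steinWeight.bdd_mul hh.restrict
    (ae_restrict_of_forall_mem measurableSet_realIoo hM)

theorem abs_ETau_le (hτ : SteinKernel a b τ) (hM : ∀ y ∈ realIoo a b, |h y| ≤ M) :
    |ETau a b τ h| ≤ M := by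
  have hC := hτ.integral_steinWeight_pos
  rw [ETau_eq, abs_div, abs_of_pos hC, div_le_iff₀ hC, ← integral_const_mul M]
  refine norm_integral_le_of_norm_le (G := ℝ) (hτ.integrableOn_steinWeight.const_mul M)
    (ae_restrict_of_forall_mem measurableSet_realIoo fun y hy => ?_)
  rw [norm_mul, norm_of_nonneg (hτ.steinWeight_pos hy).le]
  exact mul_le_mul_of_nonneg_right (hM y hy) (hτ.steinWeight_pos hy).le

theorem abs_sub_ETau_le (hτ : SteinKernel a b τ) (hM : ∀ y ∈ realIoo a b, |h y| ≤ M) {y : ℝ}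
    (hy : y ∈ realIoo a b) : |h y - ETau a b τ h| ≤ 2 * M := by
  linarith [abs_sub (h y) (ETau a b τ h), hM y hy, hτ.abs_ETau_le hM]

theorem integrableOn_sub_ETau_mul_steinWeight (hτ : SteinKernel a b τ)
    (hh : AEStronglyMeasurable h) (hM : ∀ y ∈ realIoo a b, |h y| ≤ M) :
    IntegrableOn (fun y => (h y - ETau a b τ h) * steinWeight τ y) (realIoo a b) := by
  simp_rw [sub_mul]
  exact (hτ.integrableOn_mul_steinWeight hh hM).sub (hτ.integrableOn_steinWeight.const_mul _)

theorem integral_sub_ETau_mul_steinWeight (hτ : SteinKernel a b τ) (hh : AEStronglyMeasurable h)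
    (hM : ∀ y ∈ realIoo a b, |h y| ≤ M) :
    ∫ y in realIoo a b, (h y - ETau a b τ h) * steinWeight τ y = 0 := by
  simp_rw [sub_mul]
  rw [integral_sub (hτ.integrableOn_mul_steinWeight hh hM)
    (hτ.integrableOn_steinWeight.const_mul _), integral_const_mul, ETau_eq,
    div_mul_cancel₀ _ hτ.integral_steinWeight_pos.ne', sub_self]

theorem abs_setIntegral_sub_ETau_mul_le (hτ : SteinKernel a b τ)
    (hM : ∀ y ∈ realIoo a b, |h y| ≤ M) {T : Set ℝ} (hTm : MeasurableSet T)
    (hT : T ⊆ realIoo a b) :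
    |∫ y in T, (h y - ETau a b τ h) * steinWeight τ y| ≤ 2 * M * ∫ y in T, steinWeight τ y := by
  rw [← integral_const_mul (2 * M)]
  refine norm_integral_le_of_norm_le (G := ℝ)
    ((hτ.integrableOn_steinWeight.mono_set hT).const_mul _)
    (ae_restrict_of_forall_mem hTm fun y hy => ?_)
  rw [norm_mul, norm_of_nonneg (hτ.steinWeight_pos (hT hy)).le]
  exact mul_le_mul_of_nonneg_right (hτ.abs_sub_ETau_le hM (hT hy)) (hτ.steinWeight_pos (hT hy)).le

theorem UTau_eq (hτ : SteinKernel a b τ) {x : ℝ} (hx : x ∈ realIoo a b) :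
    UTau a b τ h x = exp (steinPotential τ x) *
      ∫ y in realIoo a x, (h y - ETau a b τ h) * steinWeight τ y := by
  have hset : {y : ℝ | a < (y : EReal) ∧ y < x} = realIoo a x := by
    ext y
    simp [mem_realIoo]
  rw [UTau, hset, ← integral_const_mul]
  refine setIntegral_congr_fun measurableSet_realIoo fun y hy => ?_
  have hint : ∀ {u}, u ∈ realIoo a b → IntervalIntegrable (fun z => z / τ z) volume 0 u :=
    fun hu => (hτ.continuousOn_div.mono
      (ordConnected_realIoo.uIcc_subset hτ.zero_mem hu)).intervalIntegrable
  rw [← intervalIntegral.integral_interval_sub_left (hint hx) (hint ⟨hy.1, hy.2.trans hx.2⟩)]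
  simp only [steinWeight, steinPotential, sub_eq_add_neg, exp_add]
  ring

theorem setIntegral_left_eq_neg_setIntegral_right (hτ : SteinKernel a b τ)
    (hh : AEStronglyMeasurable h) (hM : ∀ y ∈ realIoo a b, |h y| ≤ M) {x : ℝ}
    (hx : x ∈ realIoo a b) :
    ∫ y in realIoo a x, (h y - ETau a b τ h) * steinWeight τ y =
      -∫ y in realIoo x b, (h y - ETau a b τ h) * steinWeight τ y := by
  have hright : realIoo a b \ Iio x = insert x (realIoo x b) := by
    ext y
    simp only [Set.mem_sdiff, mem_insert_iff, mem_realIoo, mem_Iio, not_lt, EReal.coe_lt_coe_iff]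
    constructor
    · rintro ⟨⟨-, hyb⟩, hxy⟩
      rcases hxy.eq_or_lt with rfl | hxy
      exacts [.inl rfl, .inr ⟨hxy, hyb⟩]
    · rintro (rfl | ⟨hxy, hyb⟩)
      exacts [⟨hx, le_rfl⟩, ⟨⟨hx.1.trans (EReal.coe_lt_coe_iff.2 hxy), hyb⟩, hxy.le⟩]
  have hsplit := integral_inter_add_sdiff (t := Iio x) measurableSet_Iio
    (hτ.integrableOn_sub_ETau_mul_steinWeight hh hM)
  rw [realIoo_inter_Iio hx.2.le, hright, setIntegral_congr_set (insert_ae_eq_self x _),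
    hτ.integral_sub_ETau_mul_steinWeight hh hM] at hsplit
  linarith

theorem abs_mul_UTau_le (hτ : SteinKernel a b τ) (hh : AEStronglyMeasurable h)
    (hM : ∀ y ∈ realIoo a b, |h y| ≤ M) {x : ℝ} (hx : x ∈ realIoo a b) :
    |x * UTau a b τ h x| ≤ 2 * M := by
  obtain ⟨T, hTm, hTS, hTq, hUT⟩ : ∃ T, MeasurableSet T ∧ T ⊆ realIoo a b ∧
      |x| * ∫ y in T, steinWeight τ y ≤ exp (-steinPotential τ x) ∧
      |∫ y in realIoo a x, (h y - ETau a b τ h) * steinWeight τ y| =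
        |∫ y in T, (h y - ETau a b τ h) * steinWeight τ y| := by
    rcases lt_trichotomy x 0 with hx0 | rfl | hx0
    · refine ⟨realIoo a x, measurableSet_realIoo, fun y hy => ⟨hy.1, hy.2.trans hx.2⟩, ?_, rfl⟩
      rw [abs_of_neg hx0]
      exact (hτ.integrableOn_steinWeight_left hx hx0).2
    · refine ⟨realIoo a 0, measurableSet_realIoo, fun y hy => ⟨hy.1, hy.2.trans hx.2⟩, ?_, rfl⟩
      rw [abs_zero, zero_mul]
      exact (exp_pos _).le
    · refine ⟨realIoo x b, measurableSet_realIoo, fun y hy => ⟨hx.1.trans hy.1, hy.2⟩, ?_,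
        by rw [hτ.setIntegral_left_eq_neg_setIntegral_right hh hM hx, abs_neg]⟩
      rw [abs_of_pos hx0]
      exact (hτ.integrableOn_steinWeight_right hx hx0).2
  have hM0 : 0 ≤ M := (abs_nonneg _).trans (hM 0 hτ.zero_mem)
  rw [hτ.UTau_eq hx, abs_mul, abs_mul, abs_of_pos (exp_pos _), hUT]
  calc |x| * (exp (steinPotential τ x) * |∫ y in T, (h y - ETau a b τ h) * steinWeight τ y|)
      ≤ |x| * (exp (steinPotential τ x) * (2 * M * ∫ y in T, steinWeight τ y)) := by
        gcongr
        exact hτ.abs_setIntegral_sub_ETau_mul_le hM hTm hTS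
    _ = 2 * M * exp (steinPotential τ x) * (|x| * ∫ y in T, steinWeight τ y) := by ring
    _ ≤ 2 * M * exp (steinPotential τ x) * exp (-steinPotential τ x) := by gcongr
    _ = 2 * M := by rw [mul_assoc, ← exp_add, add_neg_cancel, exp_zero, mul_one]

theorem abs_mul_deriv_sub_mul_UTau_le (hτ : SteinKernel a b τ) (hh : AEStronglyMeasurable h)
    (hM : ∀ y ∈ realIoo a b, |h y| ≤ M) {x U' : ℝ} (hx : x ∈ realIoo a b)
    (hU : HasDerivAt (UTau a b τ h) U' x) :
    |τ x * U' - x * UTau a b τ h x| ≤ 2 * M := by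
  set G : ℝ → ℝ := fun t => ∫ y in realIoo a t, (h y - ETau a b τ h) * steinWeight τ y
  set D := U' - x / τ x * UTau a b τ h x
  have hGU : (fun t => exp (-steinPotential τ t) * UTau a b τ h t) =ᶠ[𝓝 x] G := by
    filter_upwards [isOpen_realIoo.mem_nhds hx] with t ht
    rw [hτ.UTau_eq ht, ← mul_assoc, ← exp_add, neg_add_cancel, exp_zero, one_mul]
  have hG : HasDerivAt G (exp (-steinPotential τ x) * D) x := by
    refine (((hτ.hasDerivAt_steinPotential hx).neg.exp.mul hU).congr_of_eventuallyEq
      hGU.symm).congr_deriv ?_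
    simp only [D, Pi.neg_apply]
    ring
  have hΨ : HasDerivAt (fun t => 2 * M * ∫ y in x..t, steinWeight τ y)
      (2 * M * steinWeight τ x) x :=
    (hτ.continuousOn_steinWeight.hasDerivAt_intervalIntegral isOpen_realIoo ordConnected_realIoo
      hx hx).const_mul _
  have hGΨ : ∀ᶠ t in 𝓝[>] x, ‖G t - G x‖ ≤
      2 * M * (∫ y in x..t, steinWeight τ y) - 2 * M * ∫ y in x..x, steinWeight τ y := by
    filter_upwards [nhdsWithin_le_nhds (isOpen_realIoo.mem_nhds hx), self_mem_nhdsWithin]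
      with t ht hxt
    have hIoc : Ioc x t ⊆ realIoo a b := fun y hy =>
      ordConnected_realIoo.out hx ht (Ioc_subset_Icc_self hy)
    simp only [G]
    rw [intervalIntegral.integral_same, mul_zero, sub_zero,
      setIntegral_realIoo_sub_eq_intervalIntegral hx.1 hxt.le
        ((hτ.integrableOn_sub_ETau_mul_steinWeight hh hM).mono_set fun y hy =>
          ⟨hy.1, hy.2.trans ht.2⟩),
      intervalIntegral.integral_of_le hxt.le, intervalIntegral.integral_of_le hxt.le]
    exact hτ.abs_setIntegral_sub_ETau_mul_le hM measurableSet_Ioc hIoc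
  have hbound : exp (-steinPotential τ x) * |D| ≤
      2 * M * (exp (-steinPotential τ x) / τ x) := by
    simpa [abs_mul, steinWeight] using norm_le_of_hasDerivAt_of_norm_sub_le hG hΨ hGΨ
  have hτx := hτ.pos x hx
  have hexp := exp_pos (-steinPotential τ x)
  calc |τ x * U' - x * UTau a b τ h x|
      = τ x / exp (-steinPotential τ x) * (exp (-steinPotential τ x) * |D|) := by
        rw [show τ x * U' - x * UTau a b τ h x = τ x * D by simp only [D]; field_simp,
          abs_mul, abs_of_pos hτx]
        field_simp
    _ ≤ τ x / exp (-steinPotential τ x) * (2 * M * (exp (-steinPotential τ x) / τ x)) := by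
        gcongr
    _ = 2 * M := by field_simp

end SteinKernel

theorem stein_solution_bound_general
    (a b : EReal) (ha : a < 0) (hb : 0 < b) (τ : ℝ → ℝ)
    (hτc : Continuous τ)
    (hτpos : ∀ x : ℝ, 0 < τ x ↔ (a < (x : EReal) ∧ (x : EReal) < b))
    (h : ℝ → ℝ)
    (hpc : ∃ S : Finset ℝ, ContinuousOn h ((S : Set ℝ)ᶜ))
    (U' : ℝ → ℝ)
    (hU' : ∀ x : ℝ, a < (x : EReal) → (x : EReal) < b →
      HasDerivAt (UTau a b τ h) (U' x) x) :
    ∀ M : ℝ, (∀ x : ℝ, a < (x : EReal) → (x : EReal) < b → |h x| ≤ M) →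
      ∀ x : ℝ, a < (x : EReal) → (x : EReal) < b →
        |x * UTau a b τ h x| + |τ x * U' x| ≤ 6 * M := by
  intro M hM x hax hxb
  have hτ : SteinKernel a b τ := ⟨ha, hb, hτc.continuousOn, fun y hy => (hτpos y).2 hy⟩
  obtain ⟨S, hS⟩ := hpc
  have hh : AEStronglyMeasurable h volume :=
    hS.aestronglyMeasurable_of_countable_compl S.countable_toSet
  have hM' : ∀ y ∈ realIoo a b, |h y| ≤ M := fun y hy => hM y hy.1 hy.2
  have hxU := hτ.abs_mul_UTau_le hh hM' ⟨hax, hxb⟩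
  have hτU := hτ.abs_mul_deriv_sub_mul_UTau_le hh hM' ⟨hax, hxb⟩ (hU' x hax hxb)
  linarith [abs_sub_abs_le_abs_sub (τ x * U' x) (x * UTau a b τ h x)]

/-- Stein's bound: `sup_{x ∈ (a,b)} (|x U_τ h(x)| + |τ(x) (U_τ h)'(x)|) ≤ 6 sup_{(a,b)} |h|`. -/
theorem stein_solution_bound
    (a b : EReal) (ha : a < 0) (hb : 0 < b) (τ : ℝ → ℝ)
    (hτc : Continuous τ) (hτ0 : ∀ x, 0 ≤ τ x)
    (hτpos : ∀ x : ℝ, 0 < τ x ↔ (a < (x : EReal) ∧ (x : EReal) < b))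
    (hdiv_pos : ∫⁻ y in {y : ℝ | 0 < y ∧ (y : EReal) < b},
      ENNReal.ofReal (y / τ y) = ⊤)
    (hdiv_neg : ∫⁻ y in {y : ℝ | a < (y : EReal) ∧ y < 0},
      ENNReal.ofReal (-y / τ y) = ⊤)
    (h : ℝ → ℝ) (hbdd : ∃ M, ∀ x, |h x| ≤ M)
    (hpc : ∃ S : Finset ℝ, ContinuousOn h ((S : Set ℝ)ᶜ))
    (U' : ℝ → ℝ)
    (hU' : ∀ x : ℝ, a < (x : EReal) → (x : EReal) < b →
      HasDerivAt (UTau a b τ h) (U' x) x) :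
    ∀ M : ℝ, (∀ x : ℝ, a < (x : EReal) → (x : EReal) < b → |h x| ≤ M) →
      ∀ x : ℝ, a < (x : EReal) → (x : EReal) < b →
        |x * UTau a b τ h x| + |τ x * U' x| ≤ 6 * M :=
  stein_solution_bound_general a b ha hb τ hτc hτpos h hpc U' hU'
end

section
/- Let Z be a real random variable whose law has density p with respect to Lebesgue measure such that E|Z| < ∞, E[Z] = 0, and there exist −∞ ≤ a < 0 < b ≤ +∞ with p(x) > 0 if, and only if, x ∈ (a,b). Define τ(x) = (∫_x^{+∞} y p(y) dy)/p(x) for x ∈ (a,b) and τ(x) = 0 otherwise. Then for every differentiable f : ℝ → ℝ such that E|τ(Z) f'(Z)| < ∞, one has E|Z f(Z)| < ∞ and E[τ(Z) f'(Z) − Z f(Z)] = 0. -/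
/-!
Let `g x = ∫_{(x,∞)} y p(y) dy`, so that `τ p = g`; since `E Z = 0`, also
`g x = -∫_{(-∞,x]} y p(y) dy`. Integrating `f'(x) y p(y)` with sign `+1` over `0 < x ≤ y` and `-1`
over `y < x ≤ 0`, in `y` first gives `f' g`, in `x` first gives `(f(y) - f(0)) y p(y)`. As `y p(y)`
has the sign of `y`, each `x`-section of this kernel has constant sign, so its absolute
integrability is exactly `E|τ(Z) f'(Z)| < ∞` and Fubini yields `E[τ(Z) f'(Z)] = E[Z f(Z)]`.
The fundamental theorem of calculus on `[0, y]` applies because `g` is continuous and positive on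
`(a, b)`, which makes `f'` locally integrable there.
-/

open MeasureTheory Set

section Density

variable {Ω α : Type*} [MeasurableSpace Ω] [MeasurableSpace α] {P : Measure Ω} {μ : Measure α}
  {Z : Ω → α} {p : α → ℝ}

theorem integrable_comp_iff_integrable_mul_density (hZ : AEMeasurable Z P) (hp : Measurable p)
    (hp0 : ∀ x, 0 ≤ p x) (hdens : P.map Z = μ.withDensity fun x => ENNReal.ofReal (p x))
    {φ : α → ℝ} (hφ : AEStronglyMeasurable φ μ) :
    Integrable (fun ω => φ (Z ω)) P ↔ Integrable (fun x => φ x * p x) μ := by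
  have hφ' : AEStronglyMeasurable φ (P.map Z) :=
    hdens ▸ hφ.mono_ac (withDensity_absolutelyContinuous _ _)
  refine (integrable_map_measure hφ' hZ).symm.trans ?_
  rw [hdens, integrable_withDensity_iff hp.ennreal_ofReal
    (ae_of_all _ fun _ => ENNReal.ofReal_lt_top)]
  simp only [ENNReal.toReal_ofReal (hp0 _)]

theorem integral_comp_eq_integral_mul_density (hZ : AEMeasurable Z P) (hp : Measurable p)
    (hp0 : ∀ x, 0 ≤ p x) (hdens : P.map Z = μ.withDensity fun x => ENNReal.ofReal (p x))
    {φ : α → ℝ} (hφ : AEStronglyMeasurable φ μ) :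
    ∫ ω, φ (Z ω) ∂P = ∫ x, φ x * p x ∂μ := by
  have hφ' : AEStronglyMeasurable φ (P.map Z) :=
    hdens ▸ hφ.mono_ac (withDensity_absolutelyContinuous _ _)
  rw [← integral_map hZ hφ', hdens, integral_withDensity_eq_integral_toReal_smul
    hp.ennreal_ofReal (ae_of_all _ fun _ => ENNReal.ofReal_lt_top)]
  simp only [ENNReal.toReal_ofReal (hp0 _), smul_eq_mul, mul_comm]

end Density

theorem setIntegral_pos_of_pos_on_Ioo {f : ℝ → ℝ} {s : Set ℝ} {c d : ℝ} (hs : MeasurableSet s)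
    (hf : IntegrableOn f s) (hf0 : ∀ x ∈ s, 0 ≤ f x) (hcd : c < d) (hsub : Ioo c d ⊆ s)
    (hpos : ∀ x ∈ Ioo c d, 0 < f x) : 0 < ∫ x in s, f x := by
  rw [setIntegral_pos_iff_support_of_nonneg_ae (ae_restrict_of_forall_mem hs hf0) hf]
  calc (0 : ENNReal) < volume (Ioo c d) := by simpa using hcd
    _ ≤ volume (Function.support f ∩ s) :=
      measure_mono fun x hx => ⟨(hpos x hx).ne', hsub hx⟩

theorem intervalIntegrable_of_integrable_mul {φ g : ℝ → ℝ} {c d : ℝ}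
    (hφg : Integrable fun x => φ x * g x) (hg : ContinuousOn g (uIcc c d))
    (hg0 : ∀ x ∈ uIcc c d, g x ≠ 0) : IntervalIntegrable φ volume c d := by
  have : IntegrableOn (fun x => (g x)⁻¹ * (φ x * g x)) (uIcc c d) :=
    hφg.integrableOn.continuousOn_mul (hg.inv₀ hg0) isCompact_uIcc
  refine (this.congr_fun (fun x hx => ?_) measurableSet_uIcc).intervalIntegrable
  field_simp [hg0 x hx]

noncomputable def signedIndicatorIoc (y x : ℝ) : ℝ :=
  (Ioc 0 y).indicator 1 x - (Ioc y 0).indicator 1 x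

theorem measurable_signedIndicatorIoc :
    Measurable fun q : ℝ × ℝ => signedIndicatorIoc q.2 q.1 := by
  simp only [signedIndicatorIoc, indicator_apply, mem_Ioc, Pi.one_apply]
  exact (Measurable.ite ((measurableSet_lt measurable_const measurable_fst).inter
      (measurableSet_le measurable_fst measurable_snd)) measurable_const measurable_const).sub
    (Measurable.ite ((measurableSet_lt measurable_snd measurable_fst).inter
      (measurableSet_le measurable_fst measurable_const)) measurable_const measurable_const)

theorem integral_mul_signedIndicatorIoc (φ : ℝ → ℝ) (y : ℝ) :
    ∫ x, φ x * signedIndicatorIoc y x = ∫ x in 0..y, φ x := by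
  simp only [signedIndicatorIoc, mul_sub, ← indicator_mul_right, Pi.one_apply, mul_one]
  rcases le_total 0 y with hy | hy
  · simp [Ioc_eq_empty_of_le hy, intervalIntegral.integral_of_le hy,
      integral_indicator measurableSet_Ioc]
  · simp [Ioc_eq_empty_of_le hy, intervalIntegral.integral_of_ge hy,
      integral_indicator measurableSet_Ioc, integral_neg]

section TailIntegral

variable {h : ℝ → ℝ}

theorem integral_Ioi_eq_neg_integral_Iic (hh : Integrable h) (h0 : ∫ y, h y = 0) (x : ℝ) :
    ∫ y in Ioi x, h y = -∫ y in Iic x, h y := by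
  linarith [intervalIntegral.integral_Iic_add_Ioi (b := x) hh.integrableOn hh.integrableOn]

theorem continuous_integral_Ioi (hh : Integrable h) : Continuous fun x => ∫ y in Ioi x, h y :=
  continuous_iff_continuousAt.2 fun x =>
    (hh.integrableOn (s := Ioi (x - 1))).continuousOn_Ici_primitive_Ioi.continuousAt
      (Ici_mem_nhds (by linarith))

theorem signedIndicatorIoc_mul_nonneg (hpos : ∀ y, 0 < y → 0 ≤ h y)
    (hneg : ∀ y, y < 0 → h y ≤ 0) (x y : ℝ) : 0 ≤ signedIndicatorIoc y x * h y := by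
  by_cases hx : x ∈ Ioc 0 y
  · have hx' : x ∉ Ioc y 0 := fun hx' => by linarith [hx.1, hx'.2]
    simp [signedIndicatorIoc, hx, hx', hpos y (hx.1.trans_le hx.2)]
  · by_cases hx' : x ∈ Ioc y 0
    · simp [signedIndicatorIoc, hx, hx', hneg y (hx'.1.trans_le hx'.2)]
    · simp [signedIndicatorIoc, hx, hx']

theorem integral_signedIndicatorIoc_mul (hh : Integrable h) (h0 : ∫ y, h y = 0) (x : ℝ) :
    ∫ y, signedIndicatorIoc y x * h y = ∫ y in Ioi x, h y := by
  rcases lt_or_ge 0 x with hx | hx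
  · have hsec : ∀ y, signedIndicatorIoc y x * h y = (Ici x).indicator h y := fun y => by
      by_cases hy : x ≤ y <;> simp [signedIndicatorIoc, hx, hy, hx.not_ge]
    simp_rw [hsec, integral_indicator measurableSet_Ici, integral_Ici_eq_integral_Ioi]
  · have hsec : ∀ y, signedIndicatorIoc y x * h y = -(Iio x).indicator h y := fun y => by
      by_cases hy : y < x <;> simp [signedIndicatorIoc, hx, hy, not_lt.2 hx]
    simp_rw [hsec, integral_neg, integral_indicator measurableSet_Iio,
      ← integral_Iic_eq_integral_Iio, integral_Ioi_eq_neg_integral_Iic hh h0]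

theorem integrable_signedIndicatorIoc_mul (hh : Integrable h) (x : ℝ) :
    Integrable fun y => signedIndicatorIoc y x * h y := by
  refine hh.bdd_mul (c := 2) ?_ (ae_of_all _ fun y => ?_)
  · exact (measurable_signedIndicatorIoc.comp measurable_prodMk_left).aestronglyMeasurable
  · simp only [signedIndicatorIoc, indicator_apply, Pi.one_apply]
    split_ifs <;> norm_num

theorem integral_mul_integral_Ioi_eq_integral_intervalIntegral_mul (hh : Integrable h)
    (h0 : ∫ y, h y = 0) (hpos : ∀ y, 0 < y → 0 ≤ h y) (hneg : ∀ y, y < 0 → h y ≤ 0)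
    {φ : ℝ → ℝ} (hφ : AEStronglyMeasurable φ)
    (hφg : Integrable fun x => φ x * ∫ y in Ioi x, h y) :
    Integrable (fun y => (∫ x in 0..y, φ x) * h y) ∧
      ∫ x, φ x * ∫ y in Ioi x, h y = ∫ y, (∫ x in 0..y, φ x) * h y := by
  set K : ℝ → ℝ → ℝ := fun x y => φ x * (signedIndicatorIoc y x * h y)
  have hK_left : ∀ x, ∫ y, K x y = φ x * ∫ y in Ioi x, h y := fun x => by
    rw [integral_const_mul, integral_signedIndicatorIoc_mul hh h0]
  have hK_right : ∀ y, ∫ x, K x y = (∫ x in 0..y, φ x) * h y := fun y => by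
    simp only [K, ← mul_assoc, integral_mul_const, integral_mul_signedIndicatorIoc]
  have hK_norm : ∀ x, ∫ y, ‖K x y‖ = ‖φ x * ∫ y in Ioi x, h y‖ := fun x => by
    have hnn := signedIndicatorIoc_mul_nonneg hpos hneg x
    have hg : 0 ≤ ∫ y in Ioi x, h y :=
      integral_signedIndicatorIoc_mul hh h0 x ▸ integral_nonneg hnn
    simp only [K, norm_mul, Real.norm_of_nonneg (hnn _), integral_const_mul,
      integral_signedIndicatorIoc_mul hh h0, Real.norm_of_nonneg hg]
  have hK : Integrable (Function.uncurry K) (volume.prod volume) := by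
    have hKm : AEStronglyMeasurable (Function.uncurry K) (volume.prod volume) :=
      hφ.comp_fst.mul (measurable_signedIndicatorIoc.aestronglyMeasurable.mul hh.1.comp_snd)
    refine (integrable_prod_iff hKm).2 ⟨ae_of_all _ fun x => ?_, ?_⟩
    · exact (integrable_signedIndicatorIoc_mul hh x).const_mul (φ x)
    · simpa only [Function.uncurry_apply_pair, hK_norm] using hφg.norm
  refine ⟨hK.integral_prod_right.congr (ae_of_all _ hK_right), ?_⟩
  simpa only [hK_left, hK_right] using integral_integral_swap hK

end TailIntegral

section SupportInterval

variable {p : ℝ → ℝ} {a b : EReal}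

theorem eq_zero_of_notMem_support_interval (hp0 : ∀ x, 0 ≤ p x)
    (hsupp : ∀ x : ℝ, 0 < p x ↔ (x : EReal) ∈ Ioo a b) {x : ℝ} (hx : (x : EReal) ∉ Ioo a b) :
    p x = 0 :=
  le_antisymm (not_lt.1 (mt (hsupp x).1 hx)) (hp0 x)

theorem integral_Ioi_mul_eq_zero_of_notMem (hp0 : ∀ x, 0 ≤ p x)
    (hsupp : ∀ x : ℝ, 0 < p x ↔ (x : EReal) ∈ Ioo a b)
    (hh : Integrable fun y => y * p y) (h0 : ∫ y, y * p y = 0) {x : ℝ}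
    (hx : (x : EReal) ∉ Ioo a b) : ∫ y in Ioi x, y * p y = 0 := by
  have hzero : ∀ y : ℝ, (y : EReal) ∉ Ioo a b → y * p y = 0 := fun y hy => by
    rw [eq_zero_of_notMem_support_interval hp0 hsupp hy, mul_zero]
  rcases not_and_or.1 hx with hxa | hxb
  · rw [integral_Ioi_eq_neg_integral_Iic hh h0, neg_eq_zero]
    exact setIntegral_eq_zero_of_forall_eq_zero fun y hy =>
      hzero y fun hy' => hxa (hy'.1.trans_le (EReal.coe_le_coe_iff.2 hy))
  · exact setIntegral_eq_zero_of_forall_eq_zero fun y hy =>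
      hzero y fun hy' => hxb ((EReal.coe_lt_coe_iff.2 hy).trans hy'.2)

theorem integral_Ioi_mul_pos_of_mem (hp0 : ∀ x, 0 ≤ p x)
    (hsupp : ∀ x : ℝ, 0 < p x ↔ (x : EReal) ∈ Ioo a b)
    (hh : Integrable fun y => y * p y) (h0 : ∫ y, y * p y = 0) {x : ℝ}
    (hx : (x : EReal) ∈ Ioo a b) : 0 < ∫ y in Ioi x, y * p y := by
  rcases le_or_gt 0 x with hx0 | hx0
  · obtain ⟨t, hxt, htb⟩ := EReal.exists_between_coe_real hx.2
    refine setIntegral_pos_of_pos_on_Ioo measurableSet_Ioi hh.integrableOn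
      (fun y hy => mul_nonneg (hx0.trans hy.le) (hp0 y)) (EReal.coe_lt_coe_iff.1 hxt)
      Ioo_subset_Ioi_self fun y hy => mul_pos (hx0.trans_lt hy.1) ((hsupp y).2 ?_)
    exact ⟨hx.1.trans (EReal.coe_lt_coe_iff.2 hy.1), (EReal.coe_lt_coe_iff.2 hy.2).trans htb⟩
  · obtain ⟨t, hat, htx⟩ := EReal.exists_between_coe_real hx.1
    rw [integral_Ioi_eq_neg_integral_Iic hh h0, ← integral_neg]
    refine setIntegral_pos_of_pos_on_Ioo measurableSet_Iic hh.neg.integrableOn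
      (fun y hy => neg_nonneg.2 (mul_nonpos_of_nonpos_of_nonneg (hy.trans hx0.le) (hp0 y)))
      (EReal.coe_lt_coe_iff.1 htx) (Ioo_subset_Ioc_self.trans Ioc_subset_Iic_self)
      fun y hy => neg_pos.2 (mul_neg_of_neg_of_pos (hy.2.trans hx0) ((hsupp y).2 ?_))
    exact ⟨hat.trans (EReal.coe_lt_coe_iff.2 hy.1), (EReal.coe_lt_coe_iff.2 hy.2).trans hx.2⟩

theorem integral_deriv_eq_sub_of_mem (hp0 : ∀ x, 0 ≤ p x)
    (hsupp : ∀ x : ℝ, 0 < p x ↔ (x : EReal) ∈ Ioo a b)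
    (hh : Integrable fun y => y * p y) (h0 : ∫ y, y * p y = 0) (ha : a < 0) (hb : 0 < b)
    {f f' : ℝ → ℝ} (hf : ∀ x, HasDerivAt f (f' x) x)
    (hG : Integrable fun x => f' x * ∫ y in Ioi x, y * p y) {y : ℝ}
    (hy : (y : EReal) ∈ Ioo a b) : ∫ x in 0..y, f' x = f y - f 0 := by
  have hS : OrdConnected ((fun x : ℝ => (x : EReal)) ⁻¹' Ioo a b) :=
    ordConnected_Ioo.preimage_mono EReal.coe_strictMono.monotone
  have hsub := hS.uIcc_subset (x := 0) ⟨ha, hb⟩ hy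
  exact intervalIntegral.integral_eq_sub_of_hasDerivAt (fun x _ => hf x)
    (intervalIntegrable_of_integrable_mul hG (continuous_integral_Ioi hh).continuousOn
      fun x hx => (integral_Ioi_mul_pos_of_mem hp0 hsupp hh h0 (hsub hx)).ne')

theorem stein_identity_of_density (hp0 : ∀ x, 0 ≤ p x)
    (hsupp : ∀ x : ℝ, 0 < p x ↔ (x : EReal) ∈ Ioo a b)
    (hh : Integrable fun y => y * p y) (h0 : ∫ y, y * p y = 0) (ha : a < 0) (hb : 0 < b)
    {f f' : ℝ → ℝ} (hf : ∀ x, HasDerivAt f (f' x) x)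
    (hG : Integrable fun x => f' x * ∫ y in Ioi x, y * p y) :
    Integrable (fun x => x * f x * p x) ∧
      ∫ x, f' x * ∫ y in Ioi x, y * p y = ∫ x, x * f x * p x := by
  have hf'm : Measurable f' := funext (fun x => (hf x).deriv) ▸ measurable_deriv f
  obtain ⟨hint_right, heq⟩ := integral_mul_integral_Ioi_eq_integral_intervalIntegral_mul hh h0
    (fun y hy => mul_nonneg hy.le (hp0 y))
    (fun y hy => mul_nonpos_of_nonpos_of_nonneg hy.le (hp0 y)) hf'm.aestronglyMeasurable hG
  have hFTC : ∀ y, (∫ x in 0..y, f' x) * (y * p y) = (f y - f 0) * (y * p y) := fun y => by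
    by_cases hy : (y : EReal) ∈ Ioo a b
    · rw [integral_deriv_eq_sub_of_mem hp0 hsupp hh h0 ha hb hf hG hy]
    · rw [eq_zero_of_notMem_support_interval hp0 hsupp hy, mul_zero, mul_zero, mul_zero]
  have hsplit : ∀ x, x * f x * p x = (f x - f 0) * (x * p x) + f 0 * (x * p x) := fun x => by
    ring
  simp_rw [hFTC] at hint_right heq
  simp_rw [hsplit]
  refine ⟨hint_right.add (hh.const_mul _), ?_⟩
  rw [heq, integral_add hint_right (hh.const_mul _), integral_const_mul, h0, mul_zero, add_zero]

theorem mul_density_eq_integral_Ioi (hp0 : ∀ x, 0 ≤ p x)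
    (hsupp : ∀ x : ℝ, 0 < p x ↔ (x : EReal) ∈ Ioo a b)
    (hh : Integrable fun y => y * p y) (h0 : ∫ y, y * p y = 0) {τ : ℝ → ℝ}
    (hτ : ∀ x : ℝ, τ x = if (x : EReal) ∈ Ioo a b then (∫ y in Ioi x, y * p y) / p x else 0)
    (x : ℝ) : τ x * p x = ∫ y in Ioi x, y * p y := by
  rw [hτ x]
  split_ifs with hx
  · exact div_mul_cancel₀ _ ((hsupp x).2 hx).ne'
  · rw [zero_mul, integral_Ioi_mul_eq_zero_of_notMem hp0 hsupp hh h0 hx]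

theorem measurable_of_eq_ite_integral_Ioi_div (hp : Measurable p)
    (hh : Integrable fun y => y * p y) {τ : ℝ → ℝ}
    (hτ : ∀ x : ℝ, τ x = if (x : EReal) ∈ Ioo a b then (∫ y in Ioi x, y * p y) / p x else 0) :
    Measurable τ := by
  rw [funext hτ]
  exact Measurable.ite (measurableSet_Ioo.preimage measurable_coe_real_ereal)
    ((continuous_integral_Ioi hh).measurable.div hp) measurable_const

end SupportInterval

theorem stein_identity_general_density_general
    {Ω : Type*} [MeasurableSpace Ω] (P : Measure Ω)
    (Z : Ω → ℝ) (hZmeas : Measurable Z)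
    (p : ℝ → ℝ) (hpmeas : Measurable p) (hp0 : ∀ x, 0 ≤ p x)
    (hdens : P.map Z = volume.withDensity (fun x => ENNReal.ofReal (p x)))
    (a b : EReal) (ha : a < 0) (hb : 0 < b)
    (hsupp : ∀ x : ℝ, 0 < p x ↔ (a < (x : EReal) ∧ (x : EReal) < b))
    (hZint : Integrable Z P) (hZmean : ∫ ω, Z ω ∂P = 0)
    (τ : ℝ → ℝ)
    (hτ : ∀ x : ℝ, τ x =
      if a < (x : EReal) ∧ (x : EReal) < b then (∫ y in Set.Ioi x, y * p y) / p x
      else 0)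
    (f f' : ℝ → ℝ) (hf : ∀ x, HasDerivAt f (f' x) x)
    (hint : Integrable (fun ω => τ (Z ω) * f' (Z ω)) P) :
    Integrable (fun ω => Z ω * f (Z ω)) P ∧
      ∫ ω, (τ (Z ω) * f' (Z ω) - Z ω * f (Z ω)) ∂P = 0 := by
  have hintegrable (φ : ℝ → ℝ) (hφ : Measurable φ) :=
    integrable_comp_iff_integrable_mul_density hZmeas.aemeasurable hpmeas hp0 hdens
      hφ.aestronglyMeasurable
  have hintegral (φ : ℝ → ℝ) (hφ : Measurable φ) :=
    integral_comp_eq_integral_mul_density hZmeas.aemeasurable hpmeas hp0 hdens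
      hφ.aestronglyMeasurable
  have hh : Integrable fun y => y * p y := (hintegrable (fun x => x) measurable_id).1 hZint
  have h0 : ∫ y, y * p y = 0 := by rwa [← hintegral (fun x => x) measurable_id]
  have hτm := measurable_of_eq_ite_integral_Ioi_div hpmeas hh hτ
  have hf'm : Measurable f' := funext (fun x => (hf x).deriv) ▸ measurable_deriv f
  have hfm : Measurable f := (continuous_iff_continuousAt.2 fun x => (hf x).continuousAt).measurable
  have hτf' : ∀ x, τ x * f' x * p x = f' x * ∫ y in Ioi x, y * p y := fun x => by
    rw [mul_right_comm, mul_density_eq_integral_Ioi hp0 hsupp hh h0 hτ, mul_comm]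
  have hG : Integrable fun x => f' x * ∫ y in Ioi x, y * p y := by
    simpa only [hτf'] using (hintegrable (fun x => τ x * f' x) (hτm.mul hf'm)).1 hint
  obtain ⟨hZf, heq⟩ := stein_identity_of_density hp0 hsupp hh h0 ha hb hf hG
  have hZf' := (hintegrable (fun x => x * f x) (measurable_id.mul hfm)).2 hZf
  refine ⟨hZf', ?_⟩
  rw [integral_sub hint hZf', hintegral (fun x => τ x * f' x) (hτm.mul hf'm),
    hintegral (fun x => x * f x) (measurable_id.mul hfm)]
  simp only [hτf', heq, sub_self]

/-- Stein-type identity: if `Z` has a centered integrable density `p` supported on `(a,b)`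
with `−∞ ≤ a < 0 < b ≤ +∞`, and `τ(x) = (∫_x^∞ y p(y) dy)/p(x) · 1_{(a,b)}(x)`, then for
every differentiable `f` with `E|τ(Z) f'(Z)| < ∞` one has `E|Z f(Z)| < ∞` and
`E[τ(Z) f'(Z) − Z f(Z)] = 0`. -/
theorem stein_identity_general_density
    {Ω : Type*} [MeasurableSpace Ω] (P : Measure Ω) [IsProbabilityMeasure P]
    (Z : Ω → ℝ) (hZmeas : Measurable Z)
    (p : ℝ → ℝ) (hpmeas : Measurable p) (hp0 : ∀ x, 0 ≤ p x)
    (hdens : P.map Z = volume.withDensity (fun x => ENNReal.ofReal (p x)))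
    (a b : EReal) (ha : a < 0) (hb : 0 < b)
    (hsupp : ∀ x : ℝ, 0 < p x ↔ (a < (x : EReal) ∧ (x : EReal) < b))
    (hZint : Integrable Z P) (hZmean : ∫ ω, Z ω ∂P = 0)
    (τ : ℝ → ℝ)
    (hτ : ∀ x : ℝ, τ x =
      if a < (x : EReal) ∧ (x : EReal) < b then (∫ y in Set.Ioi x, y * p y) / p x
      else 0)
    (f f' : ℝ → ℝ) (hf : ∀ x, HasDerivAt f (f' x) x)
    (hint : Integrable (fun ω => τ (Z ω) * f' (Z ω)) P) :
    Integrable (fun ω => Z ω * f (Z ω)) P ∧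
      ∫ ω, (τ (Z ω) * f' (Z ω) - Z ω * f (Z ω)) ∂P = 0 :=
  stein_identity_general_density_general P Z hZmeas p hpmeas hp0 hdens a b ha hb hsupp hZint hZmean
    τ hτ f f' hf hint
end
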